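/- Let μ ⊆ λ be Young diagrams and T = (T⁽¹⁾,…,T⁽ᵏ⁾) ∈ X_μ^λ. Then T is a fixed point of Φ (i.e. Φ(T) = T) if and only if both of the following hold: (F1) ℓ(T) = |λ| − |μ|, i.e. every component T⁽ⁱ⁾ is a single cell; and (F2) enumerating the cells of the concatenated filling T as c₁ < c₂ < ⋯ < c_{ℓ(T)} in the total order, one has c_{ℓ(T)−i+1} ∈ T⁽ⁱ⁾ for all i. -/
import Mathlib


/-- The cells of the skew shape `λ/μ`. -/
def skewCells (μ lam : YoungDiagram) : Finset (ℕ × ℕ) := lam.cells \ μ.cells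

/-- The total order on cells induced by a filling `f`: a cell `c = (i,j)` is smaller than
`c' = (i',j')` if `f c < f c'`, or `f c = f c'` and `j < j'`, or
`f c = f c'`, `j = j'` and `i > i'`. -/
def cellLT (f : ℕ × ℕ → ℕ) (c c' : ℕ × ℕ) : Prop :=
  f c < f c' ∨ (f c = f c' ∧ (c.2 < c'.2 ∨ (c.2 = c'.2 ∧ c'.1 < c.1)))

/-- `f` is a semistandard filling on the cell set `s`: entries are positive,
weakly increasing along rows (left to right) and strictly increasing down columns. -/
def IsSSYTOn (f : ℕ × ℕ → ℕ) (s : Finset (ℕ × ℕ)) : Prop :=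
  (∀ c ∈ s, 0 < f c) ∧
  (∀ i j j', j ≤ j' → (i, j) ∈ s → (i, j') ∈ s → f (i, j) ≤ f (i, j')) ∧
  (∀ i i' j, i < i' → (i, j) ∈ s → (i', j) ∈ s → f (i, j) < f (i', j))

/-- An element of `X_μ^λ`: a chain `μ = λ₀ ⊊ λ₁ ⊊ ⋯ ⊊ λ_k = λ` of Young diagrams together
with a filling of `λ/μ` whose restriction to each piece `λᵢ₊₁/λᵢ` is a semistandard Young
tableau.  (The tuple `(T⁽¹⁾, …, T⁽ᵏ⁾)` is recorded as the single concatenated filling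
`entry`, normalized to be `0` outside `λ/μ`; the chain is recorded as a function on `ℕ`
constantly equal to `λ` from index `k` on.) -/
structure XTuple (μ lam : YoungDiagram) where
  k : ℕ
  chain : ℕ → YoungDiagram
  chain_zero : chain 0 = μ
  chain_last : ∀ i, k ≤ i → chain i = lam
  chain_strict : ∀ i < k, (chain i).cells ⊂ (chain (i + 1)).cells
  entry : ℕ × ℕ → ℕ
  entry_eq_zero : ∀ c ∉ skewCells μ lam, entry c = 0
  piece_ssyt : ∀ i < k, IsSSYTOn entry ((chain (i + 1)).cells \ (chain i).cells)

/-- The cells of the `i`-th piece `T⁽ⁱ⁺¹⁾` (0-indexed: piece `i` has shape `λᵢ₊₁/λᵢ`). -/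
def pieceCells {μ lam : YoungDiagram} (T : XTuple μ lam) (i : ℕ) : Finset (ℕ × ℕ) :=
  (T.chain (i + 1)).cells \ (T.chain i).cells

/-- The length `ℓ(T) = k` of an element of `X_μ^λ`. -/
def XTuple.len {μ lam : YoungDiagram} (T : XTuple μ lam) : ℕ := T.k

/-- The cell `c`, lying in piece `i`, is splittable: its piece has more than one cell and
`c` is the largest cell of its piece. -/
def SplittableAt {μ lam : YoungDiagram} (T : XTuple μ lam) (c : ℕ × ℕ) (i : ℕ) : Prop :=
  i < T.k ∧ c ∈ pieceCells T i ∧ 1 < (pieceCells T i).card ∧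
    ∀ c' ∈ pieceCells T i, c' ≠ c → cellLT T.entry c' c

/-- The cell `c` is splittable in `T`. -/
def SplittableCell {μ lam : YoungDiagram} (T : XTuple μ lam) (c : ℕ × ℕ) : Prop :=
  ∃ i, SplittableAt T c i

/-- The cell `c`, lying in piece `i`, is mergeable: it is not in the first piece, its piece
is a single cell, the union of its piece with the previous piece is semistandard, and `c`
is larger than every cell of the previous piece. -/
def MergeableAt {μ lam : YoungDiagram} (T : XTuple μ lam) (c : ℕ × ℕ) (i : ℕ) : Prop :=
  1 ≤ i ∧ i < T.k ∧ c ∈ pieceCells T i ∧ (pieceCells T i).card = 1 ∧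
    IsSSYTOn T.entry (pieceCells T (i - 1) ∪ pieceCells T i) ∧
    ∀ c' ∈ pieceCells T (i - 1), cellLT T.entry c' c

/-- The cell `c` is mergeable in `T`. -/
def MergeableCell {μ lam : YoungDiagram} (T : XTuple μ lam) (c : ℕ × ℕ) : Prop :=
  ∃ i, MergeableAt T c i

/-- `cell(T)`: the largest cell of `T` (in the total order `cellLT T.entry`) among the
splittable or mergeable cells, or `none` (i.e. `∅`) if there is no such cell. -/
noncomputable def cellOf {μ lam : YoungDiagram} (T : XTuple μ lam) : Option (ℕ × ℕ) := by
  classical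
  exact if h : ∃ c, (SplittableCell T c ∨ MergeableCell T c) ∧
      ∀ c', (SplittableCell T c' ∨ MergeableCell T c') → c' ≠ c → cellLT T.entry c' c
    then some h.choose else none

/-- `T` is splittable if `cell(T)` is a splittable cell. -/
def XTuple.Splittable {μ lam : YoungDiagram} (T : XTuple μ lam) : Prop :=
  ∃ c, cellOf T = some c ∧ SplittableCell T c

/-- `T` is mergeable if `cell(T)` is a mergeable cell. -/
def XTuple.Mergeable {μ lam : YoungDiagram} (T : XTuple μ lam) : Prop :=
  ∃ c, cellOf T = some c ∧ MergeableCell T c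

/-- The graph of the map `Φ`:  if `cell(T)` is splittable and lies in piece `i`, the piece
is replaced by the pair `(T⁽ⁱ⁾ ∖ {cell(T)}, {cell(T)})`, i.e. the Young diagram
`λᵢ₊₁ ∖ {cell(T)}` is inserted into the chain; if `cell(T)` is mergeable and lies in piece
`i`, the pieces `i-1` and `i` are merged, i.e. `λᵢ` is deleted from the chain; if
`cell(T) = ∅` then `T` is fixed.  The filling is unchanged in all cases. -/
def PhiRel {μ lam : YoungDiagram} (T T' : XTuple μ lam) : Prop :=
  (∃ c i, cellOf T = some c ∧ SplittableAt T c i ∧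
      T'.k = T.k + 1 ∧ T'.entry = T.entry ∧
      (∀ j, j ≤ i → T'.chain j = T.chain j) ∧
      (T'.chain (i + 1)).cells = (T.chain (i + 1)).cells.erase c ∧
      (∀ j, i + 2 ≤ j → T'.chain j = T.chain (j - 1))) ∨
  (∃ c i, cellOf T = some c ∧ MergeableAt T c i ∧
      T'.k + 1 = T.k ∧ T'.entry = T.entry ∧
      (∀ j, j < i → T'.chain j = T.chain j) ∧
      (∀ j, i ≤ j → T'.chain j = T.chain (j + 1))) ∨
  (cellOf T = none ∧ T' = T)

/-- The map `Φ : X_μ^λ → X_μ^λ`. -/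
noncomputable def Phi {μ lam : YoungDiagram} (T : XTuple μ lam) : XTuple μ lam := by
  classical
  exact if h : ∃ T', PhiRel T T' then h.choose else T

lemma cellLT_trans {f : ℕ × ℕ → ℕ} {a b c : ℕ × ℕ} (h1 : cellLT f a b) (h2 : cellLT f b c) :
    cellLT f a c := by
  unfold cellLT at *; omega

lemma cellLT_asymm {f : ℕ × ℕ → ℕ} {a b : ℕ × ℕ} (h1 : cellLT f a b) (h2 : cellLT f b a) :
    False := by
  unfold cellLT at *; omega

lemma cellLT_total {f : ℕ × ℕ → ℕ} {a b : ℕ × ℕ} (h : a ≠ b) :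
    cellLT f a b ∨ cellLT f b a := by
  unfold cellLT
  have : a.2 ≠ b.2 ∨ (a.2 = b.2 ∧ a.1 ≠ b.1) := by
    by_contra hc
    push_neg at hc
    exact h (Prod.ext (hc.2 hc.1) hc.1)
  omega

lemma exists_cellLT_max (f : ℕ × ℕ → ℕ) (s : Finset (ℕ × ℕ)) (hs : s.Nonempty) :
    ∃ c ∈ s, ∀ c' ∈ s, c' ≠ c → cellLT f c' c := by
  classical
  induction s using Finset.induction_on with
  | empty => simp at hs
  | @insert a s ha ih =>
    rcases s.eq_empty_or_nonempty with rfl | hne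
    · exact ⟨a, by simp, by simp⟩
    · obtain ⟨c, hc, hmax⟩ := ih hne
      have hac : a ≠ c := fun h => ha (h ▸ hc)
      rcases cellLT_total (f := f) hac with h | h
      · refine ⟨c, Finset.mem_insert_of_mem hc, ?_⟩
        intro c' hc' hne'
        rcases Finset.mem_insert.mp hc' with rfl | hc'
        · exact h
        · exact hmax c' hc' hne'
      · refine ⟨a, Finset.mem_insert_self _ _, ?_⟩
        intro c' hc' hne'
        rcases Finset.mem_insert.mp hc' with rfl | hc'
        · exact absurd rfl hne'
        · by_cases hcc : c' = c
          · exact hcc ▸ h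
          · exact cellLT_trans (hmax c' hc' hcc) h

section XTupleLemmas
variable {μ lam : YoungDiagram} (T : XTuple μ lam)

lemma chain_subset_succ (n : ℕ) : (T.chain n).cells ⊆ (T.chain (n + 1)).cells := by
  by_cases h : n < T.k
  · exact (T.chain_strict n h).subset
  · rw [T.chain_last n (by omega), T.chain_last (n + 1) (by omega)]

lemma chain_mono {a b : ℕ} (h : a ≤ b) : (T.chain a).cells ⊆ (T.chain b).cells := by
  induction b with
  | zero => simpa [Nat.le_zero.mp h] using Finset.Subset.refl _
  | succ n ih =>
    rcases Nat.lt_or_ge a (n + 1) with h' | h'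
    · exact (ih (by omega)).trans (chain_subset_succ T n)
    · have : a = n + 1 := by omega
      subst this; exact Finset.Subset.refl _

lemma piece_subset_skew {i : ℕ} (hi : i < T.k) : pieceCells T i ⊆ skewCells μ lam := by
  intro c hc
  rw [pieceCells, Finset.mem_sdiff] at hc
  rw [skewCells, Finset.mem_sdiff]
  have h1 : (T.chain (i + 1)).cells ⊆ lam.cells := by
    have := chain_mono T (show i + 1 ≤ T.k by omega)
    rwa [T.chain_last T.k le_rfl] at this
  have h2 : μ.cells ⊆ (T.chain i).cells := by
    have := chain_mono T (Nat.zero_le i)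
    rwa [T.chain_zero] at this
  exact ⟨h1 hc.1, fun h => hc.2 (h2 h)⟩

lemma piece_nonempty {i : ℕ} (hi : i < T.k) : (pieceCells T i).Nonempty := by
  obtain ⟨c, hc1, hc2⟩ := Finset.exists_of_ssubset (T.chain_strict i hi)
  exact ⟨c, Finset.mem_sdiff.mpr ⟨hc1, hc2⟩⟩

lemma piece_disjoint {i j : ℕ} (hij : i < j) : Disjoint (pieceCells T i) (pieceCells T j) := by
  rw [Finset.disjoint_left]
  intro c hc hc'
  rw [pieceCells, Finset.mem_sdiff] at hc hc'
  exact hc'.2 (chain_mono T (by omega : i + 1 ≤ j) hc.1)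

lemma card_chain (n : ℕ) :
    (T.chain n).cells.card = μ.cells.card + ∑ i ∈ Finset.range n, (pieceCells T i).card := by
  induction n with
  | zero => simp [T.chain_zero]
  | succ n ih =>
    rw [Finset.sum_range_succ, ← Nat.add_assoc, ← ih]
    have h := Finset.card_sdiff_add_card_eq_card (chain_subset_succ T n)
    rw [pieceCells]
    omega

lemma k_eq_of_cards (h : ∀ i < T.k, (pieceCells T i).card = 1) :
    T.k = lam.cells.card - μ.cells.card := by
  have h2 := card_chain T T.k
  rw [T.chain_last T.k le_rfl] at h2
  rw [Finset.sum_congr rfl (fun i hi => h i (Finset.mem_range.mp hi)), Finset.sum_const,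
    smul_eq_mul, mul_one, Finset.card_range] at h2
  omega

end XTupleLemmas

section CellOf
variable {μ lam : YoungDiagram} (T : XTuple μ lam)

lemma mem_skew_of_cell {c : ℕ × ℕ} (h : SplittableCell T c ∨ MergeableCell T c) :
    c ∈ skewCells μ lam := by
  rcases h with ⟨i, hi⟩ | ⟨i, hi⟩
  · exact piece_subset_skew T hi.1 hi.2.1
  · exact piece_subset_skew T hi.2.1 hi.2.2.1

lemma cellOf_exists_iff :
    (∃ c, (SplittableCell T c ∨ MergeableCell T c) ∧
      ∀ c', (SplittableCell T c' ∨ MergeableCell T c') → c' ≠ c → cellLT T.entry c' c) ↔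
    ∃ c, SplittableCell T c ∨ MergeableCell T c := by
  constructor
  · rintro ⟨c, hc, -⟩; exact ⟨c, hc⟩
  · classical
    rintro ⟨c₀, hc₀⟩
    set s := (skewCells μ lam).filter
      (fun c => SplittableCell T c ∨ MergeableCell T c) with hs
    have hmem : ∀ c, c ∈ s ↔ (SplittableCell T c ∨ MergeableCell T c) := by
      intro c
      simp only [hs, Finset.mem_filter]
      exact ⟨fun h => h.2, fun h => ⟨mem_skew_of_cell T h, h⟩⟩
    obtain ⟨c, hc, hmax⟩ := exists_cellLT_max T.entry s ⟨c₀, (hmem c₀).mpr hc₀⟩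
    exact ⟨c, (hmem c).mp hc, fun c' hc' => hmax c' ((hmem c').mpr hc')⟩

lemma cellOf_eq_none_iff :
    cellOf T = none ↔ ∀ c, ¬(SplittableCell T c ∨ MergeableCell T c) := by
  unfold cellOf
  split_ifs with h
  · simp only [reduceCtorEq, false_iff]
    push_neg
    obtain ⟨c, hc, -⟩ := h
    exact ⟨c, hc⟩
  · simp only [true_iff]
    rw [cellOf_exists_iff] at h
    push_neg at h
    intro c hc
    rcases hc with hc | hc
    · exact (h c).1 hc
    · exact (h c).2 hc

lemma cellOf_spec {c : ℕ × ℕ} (h : cellOf T = some c) :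
    SplittableCell T c ∨ MergeableCell T c := by
  unfold cellOf at h
  split_ifs at h with h'
  · exact (Option.some.inj h) ▸ h'.choose_spec.1
end CellOf


section Cells
variable {μ lam : YoungDiagram} (T : XTuple μ lam)

lemma no_cells_of_rhs (h1 : ∀ i < T.k, (pieceCells T i).card = 1)
    (h2 : ∀ i i', i < i' → i' < T.k →
      ∀ c ∈ pieceCells T i, ∀ c' ∈ pieceCells T i', cellLT T.entry c' c) :
    ∀ c, ¬(SplittableCell T c ∨ MergeableCell T c) := by
  rintro c (⟨i, hik, -, hcard, -⟩ | ⟨i, hi1, hik, hc, -, -, hbig⟩)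
  · rw [h1 i hik] at hcard; omega
  · obtain ⟨c'', hc''⟩ := piece_nonempty T (show i - 1 < T.k by omega)
    exact cellLT_asymm (hbig c'' hc'') (h2 (i - 1) i (by omega) hik c'' hc'' c hc)

lemma splittable_of_not_cards (i : ℕ) (hik : i < T.k) (hcard : (pieceCells T i).card ≠ 1) :
    ∃ c, SplittableCell T c := by
  have hne := piece_nonempty T hik
  have h1 : 1 < (pieceCells T i).card := by
    have := Finset.card_pos.mpr hne; omega
  obtain ⟨c, hc, hmax⟩ := exists_cellLT_max T.entry _ hne
  exact ⟨c, i, hik, hc, h1, hmax⟩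

lemma pair_ssyt {c c' : ℕ × ℕ} {j : ℕ} (hj : 1 ≤ j) (hjk : j < T.k)
    (hc : pieceCells T (j - 1) = {c}) (hc' : pieceCells T j = {c'})
    (hlt : cellLT T.entry c c') :
    IsSSYTOn T.entry (pieceCells T (j - 1) ∪ pieceCells T j) := by
  have hj1 : j - 1 + 1 = j := by omega
  have hjk1 : j - 1 < T.k := by omega
  have hcm : c ∈ pieceCells T (j - 1) := by rw [hc]; exact Finset.mem_singleton_self c
  have hcm' : c' ∈ pieceCells T j := by rw [hc']; exact Finset.mem_singleton_self c'
  -- c is in chain j, c' is not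
  have hcj : c ∈ (T.chain j).cells := by
    have := (Finset.mem_sdiff.mp hcm).1; rwa [hj1] at this
  have hcj' : c' ∉ (T.chain j).cells := (Finset.mem_sdiff.mp hcm').2
  have hS1 := T.piece_ssyt (j - 1) hjk1
  have hS2 := T.piece_ssyt j hjk
  rw [hj1] at hS1
  have hmem : ∀ x, x ∈ pieceCells T (j - 1) ∪ pieceCells T j ↔ x = c ∨ x = c' := by
    intro x; rw [Finset.mem_union, hc, hc', Finset.mem_singleton, Finset.mem_singleton]
  refine ⟨?_, ?_, ?_⟩
  · intro x hx
    rcases (hmem x).mp hx with rfl | rfl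
    · exact hS1.1 x (Finset.mem_sdiff.mpr ⟨hcj, (Finset.mem_sdiff.mp hcm).2⟩)
    · exact hS2.1 x hcm'
  · intro r a b hab ha hb
    rcases (hmem _).mp ha with h1 | h1 <;> rcases (hmem _).mp hb with h2 | h2
    · rw [h1, ← h2]
    · -- (r,a) = c, (r,b) = c' : use cellLT
      rw [h1, h2]
      rcases hlt with h | ⟨h, -⟩
      · exact le_of_lt h
      · exact le_of_eq h
    · -- (r,a) = c', (r,b) = c : impossible, c' would be in chain j
      exfalso
      apply hcj'
      rw [← h1]
      have hcm2 : (r, b) ∈ T.chain j := by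
        rw [← YoungDiagram.mem_cells]
        rw [h2]
        exact hcj
      exact (YoungDiagram.mem_cells _).mpr (YoungDiagram.up_left_mem _ le_rfl hab hcm2)
    · rw [h1, ← h2]
  · intro r r' b hrr' ha hb
    rcases (hmem _).mp ha with h1 | h1 <;> rcases (hmem _).mp hb with h2 | h2
    · exfalso; rw [← h2] at h1; have : r = r' := congrArg Prod.fst h1; omega
    · -- (r,b) = c, (r',b) = c' : need strict
      rw [h1, h2]
      rcases hlt with h | ⟨h, hcol⟩
      · exact h
      · exfalso
        have e2 : c.2 = c'.2 := by rw [← h1, ← h2]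
        have e1 : c.1 = r := by rw [← h1]
        have e1' : c'.1 = r' := by rw [← h2]
        rcases hcol with h' | ⟨-, h'⟩
        · omega
        · omega
    · -- (r,b) = c', (r',b) = c : impossible
      exfalso
      apply hcj'
      rw [← h1]
      have hcm2 : (r', b) ∈ T.chain j := by
        rw [← YoungDiagram.mem_cells]
        rw [h2]
        exact hcj
      exact (YoungDiagram.mem_cells _).mpr
        (YoungDiagram.up_left_mem _ (le_of_lt hrr') le_rfl hcm2)
    · exfalso; rw [← h2] at h1; have : r = r' := congrArg Prod.fst h1; omega

lemma mergeable_of_not_F2 (h1 : ∀ i < T.k, (pieceCells T i).card = 1)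
    (h2 : ¬ ∀ i i', i < i' → i' < T.k →
      ∀ c ∈ pieceCells T i, ∀ c' ∈ pieceCells T i', cellLT T.entry c' c) :
    ∃ c, MergeableCell T c := by
  have hsingle : ∀ i < T.k, ∀ c ∈ pieceCells T i, pieceCells T i = {c} := by
    intro i hi c hc
    obtain ⟨a, ha⟩ := Finset.card_eq_one.mp (h1 i hi)
    rw [ha] at hc ⊢
    rw [Finset.mem_singleton] at hc
    rw [hc]
  have key : ∃ j, 1 ≤ j ∧ j < T.k ∧ ∃ c ∈ pieceCells T (j - 1), ∃ c' ∈ pieceCells T j,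
      cellLT T.entry c c' := by
    by_contra hk
    push_neg at hk
    apply h2
    intro i i' hii' hi'k
    induction i', hii' using Nat.le_induction with
    | base =>
      intro c hc c' hc'
      have hne : c' ≠ c := by
        intro h
        exact (Finset.disjoint_left.mp (piece_disjoint T (show i < i + 1 by omega)) hc)
          (h ▸ hc')
      rcases cellLT_total (f := T.entry) hne with h | h
      · exact h
      · exfalso
        exact hk (i + 1) (by omega) hi'k c (by simpa using hc) c' hc' h
    | succ n hn ih =>
      intro c hc c' hc'
      obtain ⟨cm, hcm⟩ := piece_nonempty T (show n < T.k by omega)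
      have h1' : cellLT T.entry c' cm := by
        have hne : c' ≠ cm := by
          intro h
          exact (Finset.disjoint_left.mp (piece_disjoint T (show n < n + 1 by omega)) hcm)
            (h ▸ hc')
        rcases cellLT_total (f := T.entry) hne with h | h
        · exact h
        · exfalso
          exact hk (n + 1) (by omega) hi'k cm (by simpa using hcm) c' hc' h
      exact cellLT_trans h1' (ih (by omega) c hc cm hcm)
  obtain ⟨j, hj1, hjk, c, hc, c', hc', hlt⟩ := key
  refine ⟨c', j, hj1, hjk, hc', h1 j hjk, ?_, ?_⟩
  · exact pair_ssyt T hj1 hjk (hsingle _ (by omega) c hc) (hsingle _ hjk c' hc') hlt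
  · intro c'' hc''
    rw [hsingle _ (by omega) c hc, Finset.mem_singleton] at hc''
    exact hc'' ▸ hlt
end Cells


section Construct
variable {μ lam : YoungDiagram} (T : XTuple μ lam)

lemma IsSSYTOn.mono {f : ℕ × ℕ → ℕ} {s t : Finset (ℕ × ℕ)} (h : IsSSYTOn f s) (hts : t ⊆ s) :
    IsSSYTOn f t :=
  ⟨fun c hc => h.1 c (hts hc),
   fun i j j' hjj hj hj' => h.2.1 i j j' hjj (hts hj) (hts hj'),
   fun i i' j hii hj hj' => h.2.2 i i' j hii (hts hj) (hts hj')⟩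

lemma corner_of_splittable {c : ℕ × ℕ} {i : ℕ} (h : SplittableAt T c i) :
    (c.1, c.2 + 1) ∉ (T.chain (i + 1)).cells ∧ (c.1 + 1, c.2) ∉ (T.chain (i + 1)).cells := by
  obtain ⟨hik, hcp, hcard, hmax⟩ := h
  obtain ⟨c1, c2⟩ := c
  obtain ⟨hci, hcni⟩ := Finset.mem_sdiff.mp hcp
  have hS := T.piece_ssyt i hik
  constructor
  · intro hr
    have hrn : (c1, c2 + 1) ∉ (T.chain i).cells := by
      intro hmem
      exact hcni ((YoungDiagram.mem_cells _).mp
        (YoungDiagram.up_left_mem _ le_rfl (by omega) ((YoungDiagram.mem_cells _).mpr hmem)))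
    have hrp : (c1, c2 + 1) ∈ pieceCells T i := Finset.mem_sdiff.mpr ⟨hr, hrn⟩
    have hne : (c1, c2 + 1) ≠ (c1, c2) := by
      intro h; have := congrArg Prod.snd h; simp at this
    have hlt' : T.entry (c1, c2 + 1) < T.entry (c1, c2) ∨
        (T.entry (c1, c2 + 1) = T.entry (c1, c2) ∧
          (c2 + 1 < c2 ∨ (c2 + 1 = c2 ∧ c1 < c1))) := hmax _ hrp hne
    have hle : T.entry (c1, c2) ≤ T.entry (c1, c2 + 1) :=
      hS.2.1 c1 c2 (c2 + 1) (by omega) hcp hrp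
    omega
  · intro hd
    have hdn : (c1 + 1, c2) ∉ (T.chain i).cells := by
      intro hmem
      exact hcni ((YoungDiagram.mem_cells _).mp
        (YoungDiagram.up_left_mem _ (by omega) le_rfl ((YoungDiagram.mem_cells _).mpr hmem)))
    have hdp : (c1 + 1, c2) ∈ pieceCells T i := Finset.mem_sdiff.mpr ⟨hd, hdn⟩
    have hne : (c1 + 1, c2) ≠ (c1, c2) := by
      intro h; have := congrArg Prod.fst h; simp at this
    have hlt' : T.entry (c1 + 1, c2) < T.entry (c1, c2) ∨
        (T.entry (c1 + 1, c2) = T.entry (c1, c2) ∧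
          (c2 < c2 ∨ (c2 = c2 ∧ c1 < c1 + 1))) := hmax _ hdp hne
    have hle : T.entry (c1, c2) < T.entry (c1 + 1, c2) :=
      hS.2.2 c1 (c1 + 1) c2 (by omega) hcp hdp
    omega

lemma exists_split {c : ℕ × ℕ} {i : ℕ} (h : SplittableAt T c i) (hc : cellOf T = some c) :
    ∃ T', PhiRel T T' := by
  classical
  obtain ⟨hr, hd⟩ := corner_of_splittable T h
  obtain ⟨hik, hcp, hcard, hmax⟩ := h
  obtain ⟨hci, hcni⟩ := Finset.mem_sdiff.mp hcp
  have hlow : IsLowerSet (((T.chain (i + 1)).cells.erase c : Finset (ℕ × ℕ)) : Set (ℕ × ℕ)) := by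
    intro a b hba ha
    simp only [Finset.coe_erase, Set.mem_diff, Finset.mem_coe, Set.mem_singleton_iff] at ha ⊢
    obtain ⟨ha1, ha2⟩ := ha
    have hb1 : b ∈ (T.chain (i + 1)).cells :=
      (YoungDiagram.mem_cells _).mp
        (YoungDiagram.up_left_mem _ hba.1 hba.2 ((YoungDiagram.mem_cells _).mpr ha1))
    refine ⟨hb1, ?_⟩
    rintro rfl
    rcases Nat.lt_or_ge b.1 a.1 with hlt | hge
    · exact hd ((YoungDiagram.mem_cells _).mp
        (YoungDiagram.up_left_mem _ (by omega) hba.2 ((YoungDiagram.mem_cells _).mpr ha1)))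
    · rcases Nat.lt_or_ge b.2 a.2 with hlt' | hge'
      · exact hr ((YoungDiagram.mem_cells _).mp
          (YoungDiagram.up_left_mem _ hba.1 (by omega) ((YoungDiagram.mem_cells _).mpr ha1)))
      · exact ha2 (Prod.ext (by have := hba.1; omega) (by have := hba.2; omega))
  set Y : YoungDiagram := ⟨(T.chain (i + 1)).cells.erase c, hlow⟩ with hY
  have hchainsub := chain_subset_succ T i
  set ch : ℕ → YoungDiagram :=
    fun j => if j ≤ i then T.chain j else if j = i + 1 then Y else T.chain (j - 1) with hch
  have e1 : ∀ j, j ≤ i → ch j = T.chain j := by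
    intro j hj; simp only [hch]; rw [if_pos hj]
  have e2 : ch (i + 1) = Y := by
    simp only [hch]; rw [if_neg (by omega)]; simp
  have e3 : ∀ j, i + 2 ≤ j → ch j = T.chain (j - 1) := by
    intro j hj; simp only [hch]; rw [if_neg (by omega), if_neg (by omega)]
  refine ⟨⟨T.k + 1, ch, ?_, ?_, ?_, T.entry, T.entry_eq_zero, ?_⟩, ?_⟩
  · rw [e1 0 (Nat.zero_le i)]; exact T.chain_zero
  · intro j hj
    rw [e3 j (by omega)]
    exact T.chain_last (j - 1) (by omega)
  · intro j hj
    rcases Nat.lt_or_ge j i with h1 | h1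
    · rw [e1 j (by omega), e1 (j + 1) (by omega)]
      exact T.chain_strict j (by omega)
    · rcases Nat.eq_or_lt_of_le h1 with h1' | h2
      · subst h1'
        rw [e1 i le_rfl, e2]
        have hsub : (T.chain i).cells ⊆ Y.cells := by
          intro x hx
          exact Finset.mem_erase.mpr ⟨fun he => hcni (he ▸ hx), hchainsub hx⟩
        rw [Finset.ssubset_iff_of_subset hsub]
        obtain ⟨c', hc', hne'⟩ := Finset.exists_mem_ne hcard c
        obtain ⟨hc'1, hc'2⟩ := Finset.mem_sdiff.mp hc'
        exact ⟨c', Finset.mem_erase.mpr ⟨hne', hc'1⟩, hc'2⟩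
      · rcases Nat.eq_or_lt_of_le h2 with h3 | h3
        · -- j = i + 1 : Y ⊂ chain (i+1)
          rw [show j = i + 1 from h3.symm, e2, e3 (i + 2) le_rfl]
          have he : i + 2 - 1 = i + 1 := by omega
          rw [he]
          exact Finset.erase_ssubset hci
        · rw [e3 j (by omega), e3 (j + 1) (by omega)]
          have := T.chain_strict (j - 1) (by omega)
          have he : j - 1 + 1 = j + 1 - 1 := by omega
          rwa [he] at this
  · intro j hj
    rcases Nat.lt_or_ge j i with h1 | h1
    · rw [e1 j (by omega), e1 (j + 1) (by omega)]
      exact T.piece_ssyt j (by omega)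
    · rcases Nat.eq_or_lt_of_le h1 with h1' | h2
      · subst h1'
        rw [e1 i le_rfl, e2]
        exact (T.piece_ssyt i (by omega)).mono
          (Finset.sdiff_subset_sdiff (Finset.erase_subset _ _) Finset.Subset.rfl)
      · rcases Nat.eq_or_lt_of_le h2 with h3 | h3
        · rw [show j = i + 1 from h3.symm, e2, e3 (i + 2) le_rfl]
          have he : i + 2 - 1 = i + 1 := by omega
          rw [he]
          refine (T.piece_ssyt i hik).mono ?_
          intro x hx
          obtain ⟨hx1, hx2⟩ := Finset.mem_sdiff.mp hx
          have hxc : x = c := by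
            by_contra hne
            exact hx2 (Finset.mem_erase.mpr ⟨hne, hx1⟩)
          rw [hxc]
          exact hcp
        · rw [e3 j (by omega), e3 (j + 1) (by omega)]
          have := T.piece_ssyt (j - 1) (by omega)
          have he : j - 1 + 1 = j + 1 - 1 := by omega
          rwa [he] at this
  · refine Or.inl ⟨c, i, hc, ⟨hik, hcp, hcard, hmax⟩, rfl, rfl, ?_, ?_, ?_⟩
    · intro j hj; exact e1 j hj
    · show (ch (i + 1)).cells = _
      rw [e2]
    · intro j hj; exact e3 j hj

lemma exists_merge {c : ℕ × ℕ} {i : ℕ} (h : MergeableAt T c i) (hc : cellOf T = some c) :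
    ∃ T', PhiRel T T' := by
  classical
  obtain ⟨hi1, hik, hcp, hcard, hssyt, hbig⟩ := h
  have hi1' : i - 1 + 1 = i := by omega
  set ch : ℕ → YoungDiagram := fun j => if j < i then T.chain j else T.chain (j + 1) with hch
  have e1 : ∀ j, j < i → ch j = T.chain j := by
    intro j hj; simp only [hch]; rw [if_pos hj]
  have e2 : ∀ j, i ≤ j → ch j = T.chain (j + 1) := by
    intro j hj; simp only [hch]; rw [if_neg (by omega)]
  refine ⟨⟨T.k - 1, ch, ?_, ?_, ?_, T.entry, T.entry_eq_zero, ?_⟩, ?_⟩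
  · rw [e1 0 (by omega)]; exact T.chain_zero
  · intro j hj
    rw [e2 j (by omega)]
    exact T.chain_last (j + 1) (by omega)
  · intro j hj
    rcases Nat.lt_or_ge (j + 1) i with h1 | h1
    · rw [e1 j (by omega), e1 (j + 1) (by omega)]
      exact T.chain_strict j (by omega)
    · rcases Nat.eq_or_lt_of_le h1 with h2 | h2
      · -- i = j + 1
        rw [e1 j (by omega), e2 (j + 1) (by omega)]
        have hs1 := T.chain_strict j (by omega)
        have hs2 := T.chain_strict (j + 1) (by omega)
        exact hs1.trans hs2
      · rw [e2 j (by omega), e2 (j + 1) (by omega)]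
        exact T.chain_strict (j + 1) (by omega)
  · intro j hj
    rcases Nat.lt_or_ge (j + 1) i with h1 | h1
    · rw [e1 j (by omega), e1 (j + 1) (by omega)]
      exact T.piece_ssyt j (by omega)
    · rcases Nat.eq_or_lt_of_le h1 with h2 | h2
      · -- i = j + 1 : merged piece
        rw [e1 j (by omega), e2 (j + 1) (by omega)]
        have heq : (T.chain (j + 1 + 1)).cells \ (T.chain j).cells =
            pieceCells T (i - 1) ∪ pieceCells T i := by
          have hji : j = i - 1 := by omega
          subst hji
          rw [hi1']
          ext x
          simp only [pieceCells, hi1', Finset.mem_sdiff, Finset.mem_union]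
          have hs1 : x ∈ (T.chain (i - 1)).cells → x ∈ (T.chain i).cells :=
            fun hx => chain_mono T (by omega) hx
          have hs2 : x ∈ (T.chain i).cells → x ∈ (T.chain (i + 1)).cells :=
            fun hx => chain_mono T (by omega) hx
          constructor
          · rintro ⟨hx1, hx2⟩
            by_cases hxi : x ∈ (T.chain i).cells
            · exact Or.inl ⟨hxi, hx2⟩
            · exact Or.inr ⟨hx1, hxi⟩
          · rintro (⟨hx1, hx2⟩ | ⟨hx1, hx2⟩)
            · exact ⟨hs2 hx1, hx2⟩
            · exact ⟨hx1, fun hx => hx2 (hs1 hx)⟩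
        rw [heq]
        exact hssyt
      · rw [e2 j (by omega), e2 (j + 1) (by omega)]
        exact T.piece_ssyt (j + 1) (by omega)
  · refine Or.inr (Or.inl ⟨c, i, hc, ⟨hi1, hik, hcp, hcard, hssyt, hbig⟩, by show T.k - 1 + 1 = T.k; omega, rfl,
      ?_, ?_⟩)
    · intro j hj; exact e1 j hj
    · intro j hj; exact e2 j hj
end Construct



lemma phi_eq_of_none {μ lam : YoungDiagram} (T : XTuple μ lam) (hn : cellOf T = none) :
    Phi T = T := by
  have hex : ∃ T', PhiRel T T' := ⟨T, Or.inr (Or.inr ⟨hn, rfl⟩)⟩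
  have hPhi : Phi T = hex.choose := by unfold Phi; rw [dif_pos hex]
  rcases hex.choose_spec with ⟨c, i, hc, -⟩ | ⟨c, i, hc, -⟩ | ⟨-, hT⟩
  · rw [hn] at hc; exact absurd hc (by simp)
  · rw [hn] at hc; exact absurd hc (by simp)
  · rw [hPhi, hT]

/-- Characterization of the fixed points of `Φ`: `T ∈ X_μ^λ` satisfies `Φ(T) = T` iff
(F1) `ℓ(T) = |λ| − |μ|`, equivalently every component `T⁽ⁱ⁾` is a single cell; and
(F2) enumerating the cells of `T` in increasing order `c₁ < c₂ < ⋯ < c_{ℓ(T)}`, the cell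
`c_{ℓ(T)−i+1}` lies in `T⁽ⁱ⁾`, i.e. the cells of later components are smaller in the total
order than the cells of earlier components. -/
theorem phi_fixed_iff (μ lam : YoungDiagram) (hsub : μ ≤ lam) (T : XTuple μ lam) :
    Phi T = T ↔
      (T.k = lam.cells.card - μ.cells.card ∧ ∀ i < T.k, (pieceCells T i).card = 1) ∧
      (∀ i i', i < i' → i' < T.k →
        ∀ c ∈ pieceCells T i, ∀ c' ∈ pieceCells T i', cellLT T.entry c' c) := by
  constructor
  · intro hfix
    have hnone : cellOf T = none := by
      cases hopt : cellOf T with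
      | none => rfl
      | some c =>
        exfalso
        have hex : ∃ T', PhiRel T T' := by
          rcases cellOf_spec T hopt with ⟨i, hi⟩ | ⟨i, hi⟩
          · exact exists_split T hi hopt
          · exact exists_merge T hi hopt
        have hPhi : Phi T = hex.choose := by unfold Phi; rw [dif_pos hex]
        have hrel : PhiRel T T := by
          have := hex.choose_spec
          rwa [← hPhi, hfix] at this
        rcases hrel with ⟨c', i, -, -, hk, -⟩ | ⟨c', i, -, -, hk, -⟩ | ⟨hn, -⟩
        · omega
        · omega
        · rw [hopt] at hn; simp at hn
    rw [cellOf_eq_none_iff] at hnone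
    have hcards : ∀ i < T.k, (pieceCells T i).card = 1 := by
      by_contra hcon
      push_neg at hcon
      obtain ⟨i, hik, hcard⟩ := hcon
      obtain ⟨c, hc⟩ := splittable_of_not_cards T i hik hcard
      exact hnone c (Or.inl hc)
    refine ⟨⟨k_eq_of_cards T hcards, hcards⟩, ?_⟩
    by_contra hF2
    obtain ⟨c, hc⟩ := mergeable_of_not_F2 T hcards hF2
    exact hnone c (Or.inr hc)
  · rintro ⟨⟨-, hcards⟩, hF2⟩
    exact phi_eq_of_none T (cellOf_eq_none_iff T |>.mpr (no_cells_of_rhs T hcards hF2))
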